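/- arXiv:1802.06434 — 2 statements merged into one kernel-verified Lean document; each statement's English description precedes it below -/
import Mathlib

section
/- Let α₁,α₂,β₁,β₂ > 0 and define Λ(γ) = h(e^γ)/e^γ - (α₁+α₂+β₁+β₂)/2, where h(z) = (1/2)√((α₁+α₂-(β₁+β₂))²z² + 4(β₁z²+β₂)(α₁z²+α₂)). Then Λ'(0) = 2(α₁β₁ - α₂β₂)/(α₁+α₂+β₁+β₂). -/
/-!
Dividing by `z = e^γ` inside the square root gives
`Λ(γ) = ½ √((A - B)² + 4 (β₁e^γ + β₂e^{-γ})(α₁e^γ + α₂e^{-γ})) - (A + B)/2` with `A = α₁ + α₂`,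
`B = β₁ + β₂`. At `γ = 0` the radicand is `(A - B)² + 4AB = (A + B)²`, and the derivative of the
product there is `(β₁ - β₂)A + B(α₁ - α₂) = 2(α₁β₁ - α₂β₂)`; the chain rule for `√` finishes.
-/

open Real

lemma sqrt_quartic_div {z : ℝ} (hz : 0 < z) (c a₁ a₂ b₁ b₂ : ℝ) :
    √(c * z ^ 2 + 4 * (b₁ * z ^ 2 + b₂) * (a₁ * z ^ 2 + a₂)) / z
      = √(c + 4 * ((b₁ * z + b₂ / z) * (a₁ * z + a₂ / z))) := by
  have hsq : c + 4 * ((b₁ * z + b₂ / z) * (a₁ * z + a₂ / z))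
      = (c * z ^ 2 + 4 * (b₁ * z ^ 2 + b₂) * (a₁ * z ^ 2 + a₂)) / z ^ 2 := by
    field_simp
  rw [hsq, sqrt_div' _ (sq_nonneg z), sqrt_sq hz.le]

lemma hasDerivAt_mul_exp_add_mul_exp_neg (a b x : ℝ) :
    HasDerivAt (fun γ => a * exp γ + b * exp (-γ)) (a * exp x - b * exp (-x)) x := by
  refine (((hasDerivAt_exp x).const_mul a).add
    (((hasDerivAt_neg x).exp).const_mul b)).congr_deriv ?_
  ring

lemma hasDerivAt_exp_product_zero (a₁ a₂ b₁ b₂ : ℝ) :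
    HasDerivAt (fun γ => (b₁ * exp γ + b₂ * exp (-γ)) * (a₁ * exp γ + a₂ * exp (-γ)))
      (2 * (a₁ * b₁ - a₂ * b₂)) 0 := by
  refine ((hasDerivAt_mul_exp_add_mul_exp_neg b₁ b₂ 0).mul
    (hasDerivAt_mul_exp_add_mul_exp_neg a₁ a₂ 0)).congr_deriv ?_
  simp only [neg_zero, exp_zero]
  ring

theorem stmt_2 (α₁ α₂ β₁ β₂ : ℝ) (hα₁ : 0 < α₁) (hα₂ : 0 < α₂)
    (hβ₁ : 0 < β₁) (hβ₂ : 0 < β₂)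
    (h : ℝ → ℝ)
    (hh : ∀ z : ℝ, h z = (1/2) * Real.sqrt ((α₁ + α₂ - (β₁ + β₂))^2 * z^2
      + 4 * (β₁ * z^2 + β₂) * (α₁ * z^2 + α₂))) :
    deriv (fun γ : ℝ => h (Real.exp γ) / Real.exp γ - (α₁ + α₂ + β₁ + β₂) / 2) 0
    = 2 * (α₁*β₁ - α₂*β₂) / (α₁ + α₂ + β₁ + β₂) := by
  set S := α₁ + α₂ + β₁ + β₂
  have hS : 0 < S := by positivity
  set Q : ℝ → ℝ := fun γ => (α₁ + α₂ - (β₁ + β₂)) ^ 2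
    + 4 * ((β₁ * exp γ + β₂ * exp (-γ)) * (α₁ * exp γ + α₂ * exp (-γ)))
  have hΛ : (fun γ => h (exp γ) / exp γ - S / 2) = fun γ => 1 / 2 * √(Q γ) - S / 2 := by
    funext γ
    rw [hh, mul_div_assoc, sqrt_quartic_div (exp_pos γ)]
    simp only [Q, exp_neg, div_eq_mul_inv]
  have hQ0 : Q 0 = S ^ 2 := by
    simp only [Q, S, neg_zero, exp_zero]
    ring
  have hQ : HasDerivAt Q (4 * (2 * (α₁ * β₁ - α₂ * β₂))) 0 :=
    ((hasDerivAt_exp_product_zero α₁ α₂ β₁ β₂).const_mul 4).const_add _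
  have hQ0ne : Q 0 ≠ 0 := by rw [hQ0]; positivity
  rw [hΛ, (((hQ.sqrt hQ0ne).const_mul (1 / 2)).sub_const (S / 2)).deriv, hQ0, sqrt_sq hS.le]
  field_simp
  ring
end

section
/- Let α₁,α₂,β₁,β₂ > 0, z > 0, and let A = [[-(α₁+α₂), zβ₁ + β₂/z], [zα₁ + α₂/z, -(β₁+β₂)]]. Then for all t ≥ 0, the (2,1) entry of exp(tA) equals ((α₁z² + α₂)/h(z))·(e^{ĥ₊(z)t} - e^{ĥ₋(z)t})/2, and the (1,2) entry equals ((β₁z² + β₂)/h(z))·(e^{ĥ₊(z)t} - e^{ĥ₋(z)t})/2, where h(z) and ĥ±(z) are as defined. -/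
/-!
The matrix has trace `ĥ₊ + ĥ₋` and determinant `ĥ₊ ĥ₋`, so `ĥ₊ ≠ ĥ₋` are its eigenvalues. An
eigenvalue `λ` of `!![a, b; c, d]` has eigenvector `(b, λ - a)`; conjugating by the matrix of these
eigenvectors diagonalises `t • A`, and the off-diagonal entries of `P * diagonal (exp (λᵢ t)) * P⁻¹`
are `b (e^{λ₁ t} - e^{λ₂ t}) / (λ₁ - λ₂)` and `c (e^{λ₁ t} - e^{λ₂ t}) / (λ₁ - λ₂)`.
-/

open NormedSpace Matrix

theorem Matrix.exp_smul_eq_of_mul_eq_mul_diagonal {n : Type*} [Fintype n] [DecidableEq n]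
    {A P : Matrix n n ℝ} {v : n → ℝ} (hP : IsUnit P) (hAP : A * P = P * diagonal v) (t : ℝ) :
    exp (t • A) = P * diagonal (fun i ↦ Real.exp (v i * t)) * P⁻¹ := by
  have hA : A = P * diagonal v * P⁻¹ := by
    rw [← hAP, mul_assoc, mul_nonsing_inv _ ((isUnit_iff_isUnit_det P).mp hP), mul_one]
  rw [hA, ← Matrix.smul_mul, ← Matrix.mul_smul, ← diagonal_smul, exp_conj _ _ hP, exp_diagonal]
  congr 3
  ext i
  simp [Real.exp_eq_exp_ℝ, mul_comm]

section FinTwo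

variable {a b c d l₁ l₂ : ℝ}

theorem Matrix.fin_two_mul_eigenvectors (htr : l₁ + l₂ = a + d)
    (hdet : l₁ * l₂ = a * d - b * c) :
    !![a, b; c, d] * !![b, b; l₁ - a, l₂ - a] = !![b, b; l₁ - a, l₂ - a] * diagonal ![l₁, l₂] := by
  rw [mul_fin_two, diagonal_fin_two, mul_fin_two]
  simp only [cons_val_zero, cons_val_one, cons_val_fin_one, mul_zero, add_zero, zero_add,
    EmbeddingLike.apply_eq_iff_eq, vecCons_inj, and_true]
  exact ⟨⟨by ring, by ring⟩, by linear_combination hdet - l₁ * htr,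
    by linear_combination hdet - l₂ * htr⟩

theorem Matrix.exp_smul_fin_two (hb : b ≠ 0) (hl : l₁ ≠ l₂)
    (htr : l₁ + l₂ = a + d) (hdet : l₁ * l₂ = a * d - b * c) (t : ℝ) :
    exp (t • !![a, b; c, d]) =
      !![b, b; l₁ - a, l₂ - a] * diagonal ![Real.exp (l₁ * t), Real.exp (l₂ * t)] *
        !![b, b; l₁ - a, l₂ - a]⁻¹ := by
  have hP : (!![b, b; l₁ - a, l₂ - a]).det ≠ 0 := by
    rw [det_fin_two_of, show b * (l₂ - a) - b * (l₁ - a) = -(b * (l₁ - l₂)) by ring]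
    exact neg_ne_zero.mpr (mul_ne_zero hb (sub_ne_zero.mpr hl))
  convert exp_smul_eq_of_mul_eq_mul_diagonal ((isUnit_iff_isUnit_det _).mpr hP.isUnit)
    (fin_two_mul_eigenvectors htr hdet) t using 3
  ext i
  fin_cases i <;> rfl

theorem Matrix.exp_smul_fin_two_apply_one_zero (hb : b ≠ 0) (hl : l₁ ≠ l₂)
    (htr : l₁ + l₂ = a + d) (hdet : l₁ * l₂ = a * d - b * c) (t : ℝ) :
    exp (t • !![a, b; c, d]) 1 0 = c * (Real.exp (l₁ * t) - Real.exp (l₂ * t)) / (l₁ - l₂) := by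
  rw [exp_smul_fin_two hb hl htr hdet, inv_def, adjugate_fin_two_of, det_fin_two_of,
    Ring.inverse_eq_inv', diagonal_fin_two, Matrix.mul_smul, mul_fin_two, mul_fin_two,
    Matrix.smul_apply]
  simp only [of_apply, cons_val_zero, cons_val_one, cons_val_fin_one, mul_zero, add_zero, zero_add,
    smul_eq_mul]
  rw [show b * (l₂ - a) - b * (l₁ - a) = -(b * (l₁ - l₂)) by ring]
  have : l₁ - l₂ ≠ 0 := sub_ne_zero.mpr hl
  generalize Real.exp (l₁ * t) = E₁, Real.exp (l₂ * t) = E₂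
  field_simp
  linear_combination (E₂ - E₁) * (hdet - a * htr)

theorem Matrix.exp_smul_fin_two_apply_zero_one (hb : b ≠ 0) (hl : l₁ ≠ l₂)
    (htr : l₁ + l₂ = a + d) (hdet : l₁ * l₂ = a * d - b * c) (t : ℝ) :
    exp (t • !![a, b; c, d]) 0 1 = b * (Real.exp (l₁ * t) - Real.exp (l₂ * t)) / (l₁ - l₂) := by
  rw [exp_smul_fin_two hb hl htr hdet, inv_def, adjugate_fin_two_of, det_fin_two_of,
    Ring.inverse_eq_inv', diagonal_fin_two, Matrix.mul_smul, mul_fin_two, mul_fin_two,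
    Matrix.smul_apply]
  simp only [of_apply, cons_val_zero, cons_val_one, cons_val_fin_one, mul_zero, add_zero, zero_add,
    smul_eq_mul]
  rw [show b * (l₂ - a) - b * (l₁ - a) = -(b * (l₁ - l₂)) by ring]
  have : l₁ - l₂ ≠ 0 := sub_ne_zero.mpr hl
  generalize Real.exp (l₁ * t) = E₁, Real.exp (l₂ * t) = E₂
  field_simp
  ring

end FinTwo

theorem stmt_11 (α₁ α₂ β₁ β₂ z : ℝ) (hα₁ : 0 < α₁) (hα₂ : 0 < α₂)
    (hβ₁ : 0 < β₁) (hβ₂ : 0 < β₂) (hz : 0 < z)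
    (A : Matrix (Fin 2) (Fin 2) ℝ)
    (hA : A = !![-(α₁ + α₂), z*β₁ + β₂/z; z*α₁ + α₂/z, -(β₁ + β₂)])
    (h hplus hminus : ℝ)
    (hh : h = (1/2) * Real.sqrt ((α₁ + α₂ - (β₁ + β₂))^2 * z^2
      + 4 * (β₁ * z^2 + β₂) * (α₁ * z^2 + α₂)))
    (hp : hplus = -(α₁ + α₂ + β₁ + β₂) / 2 + h / z)
    (hm : hminus = -(α₁ + α₂ + β₁ + β₂) / 2 - h / z) :
    ∀ t : ℝ, 0 ≤ t →
      (NormedSpace.exp (t • A)) 1 0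
        = ((α₁ * z^2 + α₂) / h) * (Real.exp (hplus * t) - Real.exp (hminus * t)) / 2
      ∧ (NormedSpace.exp (t • A)) 0 1
        = ((β₁ * z^2 + β₂) / h) * (Real.exp (hplus * t) - Real.exp (hminus * t)) / 2 := by
  intro t _
  have hh_pos : 0 < h := by rw [hh]; positivity
  have hh_sq : 4 * h ^ 2 = (α₁ + α₂ - (β₁ + β₂)) ^ 2 * z ^ 2
      + 4 * (β₁ * z ^ 2 + β₂) * (α₁ * z ^ 2 + α₂) := by
    rw [hh, mul_pow, Real.sq_sqrt (by positivity)]; ring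
  have hb : z * β₁ + β₂ / z ≠ 0 := by positivity
  have hgap : hplus - hminus = 2 * h / z := by rw [hp, hm]; ring
  have hne : hplus ≠ hminus := by rw [← sub_ne_zero, hgap]; positivity
  have htr : hplus + hminus = -(α₁ + α₂) + -(β₁ + β₂) := by rw [hp, hm]; ring
  have hdet : hplus * hminus
      = -(α₁ + α₂) * -(β₁ + β₂) - (z * β₁ + β₂ / z) * (z * α₁ + α₂ / z) := by
    rw [hp, hm]; field_simp; linear_combination -hh_sq
  rw [hA, exp_smul_fin_two_apply_one_zero hb hne htr hdet,
    exp_smul_fin_two_apply_zero_one hb hne htr hdet, hgap]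
  constructor <;> field_simp
end
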